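/- For all simple types σ, τ, every strongly monotonic functional F of type σ⇒τ, every x in the interpretation of σ, and every n ∈ N: F(addcost_σ(n, x)) ⊒_τ addcost_τ(n, F(x)). -/
import Mathlib


/-- Simple types over a set of sorts `S`. -/
inductive Ty (S : Type) : Type where
  | base : S → Ty S
  | arrow : Ty S → Ty S → Ty S

/-- The interpretation of types: a base sort `ι` is interpreted as the set of
tuples `ℕ^{K ι + 1}` (so tuples always have length ≥ 1), and an arrow type as
the full function space (membership in the strongly monotonic functionals is
the predicate `Mem` below). -/
def Interp {S : Type} (K : S → ℕ) : Ty S → Type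
  | .base ι => Fin (K ι + 1) → ℕ
  | .arrow σ τ => Interp K σ → Interp K τ

mutual
/-- Membership in the set of strongly monotonic functionals of type `σ`. -/
def Mem {S : Type} (K : S → ℕ) : (σ : Ty S) → Interp K σ → Prop
  | .base _, _ => True
  | .arrow σ τ, F =>
      (∀ x, Mem K σ x → Mem K τ (F x)) ∧
      (∀ x y, Mem K σ x → Mem K σ y → TGt K σ x y → TGt K τ (F x) (F y)) ∧
      (∀ x y, Mem K σ x → Mem K σ y → TGe K σ x y → TGe K τ (F x) (F y))

/-- The hereditary strict order `⊐` on the interpretation of a type. -/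
def TGt {S : Type} (K : S → ℕ) : (σ : Ty S) → Interp K σ → Interp K σ → Prop
  | .base _, x, y => (∀ i, y i ≤ x i) ∧ y 0 < x 0
  | .arrow σ τ, F, G => (∃ x, Mem K σ x) ∧ ∀ x, Mem K σ x → TGt K τ (F x) (G x)

/-- The hereditary weak order `⊒` on the interpretation of a type. -/
def TGe {S : Type} (K : S → ℕ) : (σ : Ty S) → Interp K σ → Interp K σ → Prop
  | .base _, x, y => ∀ i, y i ≤ x i
  | .arrow σ τ, F, G => ∀ x, Mem K σ x → TGe K τ (F x) (G x)
end

/-- `addcost σ c x` hereditarily adds `c` to the cost (first) component. -/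
def addcost {S : Type} (K : S → ℕ) : (σ : Ty S) → ℕ → Interp K σ → Interp K σ
  | .base _, c, x => fun i => if i = 0 then c + x i else x i
  | .arrow σ τ, c, F => fun d => addcost K τ c (F d)

mutual
/-- The hereditarily minimal element `0_σ`. -/
def nul {S : Type} (K : S → ℕ) : (σ : Ty S) → Interp K σ
  | .base _ => fun _ => 0
  | .arrow σ τ => fun d => addcost K τ (cost K σ d) (nul K τ)

/-- The hereditary cost extraction `cost_σ`. -/
def cost {S : Type} (K : S → ℕ) : (σ : Ty S) → Interp K σ → ℕ
  | .base _, x => x 0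
  | .arrow σ τ, F => cost K τ (F (nul K σ))
end

theorem addcost_zero {S : Type} (K : S → ℕ) : ∀ (σ : Ty S) (x : Interp K σ),
    addcost K σ 0 x = x
  | .base _, x => by
      funext i; simp [addcost]
  | .arrow σ τ, F => by
      funext d; exact addcost_zero K τ (F d)

theorem addcost_add {S : Type} (K : S → ℕ) : ∀ (σ : Ty S) (a b : ℕ) (x : Interp K σ),
    addcost K σ (a + b) x = addcost K σ a (addcost K σ b x)
  | .base _, a, b, x => by
      funext i; simp only [addcost]
      by_cases h : i = 0 <;> simp [h, Nat.add_assoc]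
  | .arrow σ τ, a, b, F => by
      funext d; exact addcost_add K τ a b (F d)

theorem tge_refl {S : Type} (K : S → ℕ) : ∀ (σ : Ty S) (x : Interp K σ), TGe K σ x x
  | .base _, x => fun i => le_rfl
  | .arrow σ τ, F => fun d _ => tge_refl K τ (F d)

theorem tge_trans {S : Type} (K : S → ℕ) : ∀ (σ : Ty S) (x y z : Interp K σ),
    TGe K σ x y → TGe K σ y z → TGe K σ x z
  | .base _, x, y, z, h1, h2 => fun i => le_trans (h2 i) (h1 i)
  | .arrow σ τ, F, G, H, h1, h2 => fun d hd =>
      tge_trans K τ (F d) (G d) (H d) (h1 d hd) (h2 d hd)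

theorem addcost_tgt_mono {S : Type} (K : S → ℕ) : ∀ (σ : Ty S) (c : ℕ) (x y : Interp K σ),
    TGt K σ x y → TGt K σ (addcost K σ c x) (addcost K σ c y)
  | .base _, c, x, y, h => by
      refine ⟨fun i => ?_, ?_⟩
      · simp only [addcost]
        by_cases hi : i = 0 <;> simp [hi, h.1 i, h.1 0, Nat.add_le_add_left]
      · simpa [addcost] using Nat.add_lt_add_left h.2 c
  | .arrow σ τ, c, F, G, h =>
      ⟨h.1, fun d hd => addcost_tgt_mono K τ c (F d) (G d) (h.2 d hd)⟩

theorem addcost_tge_mono {S : Type} (K : S → ℕ) : ∀ (σ : Ty S) (c : ℕ) (x y : Interp K σ),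
    TGe K σ x y → TGe K σ (addcost K σ c x) (addcost K σ c y)
  | .base _, c, x, y, h => fun i => by
      simp only [addcost]
      by_cases hi : i = 0 <;> simp [hi, h i, h 0, Nat.add_le_add_left]
  | .arrow σ τ, c, F, G, h => fun d hd =>
      addcost_tge_mono K τ c (F d) (G d) (h d hd)

theorem mem_addcost {S : Type} (K : S → ℕ) : ∀ (σ : Ty S) (c : ℕ) (x : Interp K σ),
    Mem K σ x → Mem K σ (addcost K σ c x)
  | .base _, _, _, _ => trivial
  | .arrow σ τ, c, F, hF =>
      ⟨fun d hd => mem_addcost K τ c (F d) (hF.1 d hd),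
       fun d e hd he hde => addcost_tgt_mono K τ c (F d) (F e) (hF.2.1 d e hd he hde),
       fun d e hd he hde => addcost_tge_mono K τ c (F d) (F e) (hF.2.2 d e hd he hde)⟩

theorem addcost_tge_of_le {S : Type} (K : S → ℕ) : ∀ (σ : Ty S) (c c' : ℕ) (x : Interp K σ),
    c' ≤ c → TGe K σ (addcost K σ c x) (addcost K σ c' x)
  | .base _, c, c', x, h => fun i => by
      simp only [addcost]
      by_cases hi : i = 0 <;> simp [hi, Nat.add_le_add_right h]
  | .arrow σ τ, c, c', F, h => fun d _ =>
      addcost_tge_of_le K τ c c' (F d) h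

/-- Big mutual package: `nul` is strongly monotonic, `addcost` is strict in the
cost, and `cost` is (strictly) monotone. -/
theorem nul_cost_pack {S : Type} (K : S → ℕ) : ∀ (σ : Ty S),
    Mem K σ (nul K σ) ∧
    (∀ (c c' : ℕ) (x : Interp K σ), c' < c →
        TGt K σ (addcost K σ c x) (addcost K σ c' x)) ∧
    (∀ x y : Interp K σ, TGt K σ x y → cost K σ y < cost K σ x) ∧
    (∀ x y : Interp K σ, TGe K σ x y → cost K σ y ≤ cost K σ x)
  | .base _ => by
      refine ⟨trivial, fun c c' x h => ⟨fun i => ?_, ?_⟩, fun x y h => h.2, fun x y h => h 0⟩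
      · simp only [addcost]
        by_cases hi : i = 0 <;> simp [hi, Nat.add_le_add_right h.le]
      · simpa [addcost] using Nat.add_lt_add_right h (x 0)
  | .arrow σ τ => by
      obtain ⟨hnσ, haσ, hctσ, hceσ⟩ := nul_cost_pack K σ
      obtain ⟨hnτ, haτ, hctτ, hceτ⟩ := nul_cost_pack K τ
      refine ⟨⟨fun d hd => mem_addcost K τ _ _ hnτ,
              fun d e hd he hde => haτ _ _ _ (hctσ d e hde),
              fun d e hd he hde => addcost_tge_of_le K τ _ _ _ (hceσ d e hde)⟩,
             fun c c' F h => ⟨⟨nul K σ, hnσ⟩, fun d _ => haτ c c' (F d) h⟩,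
             fun F G h => hctτ _ _ (h.2 (nul K σ) hnσ),
             fun F G h => hceτ _ _ (h (nul K σ) hnσ)⟩

theorem mem_nul {S : Type} (K : S → ℕ) (σ : Ty S) : Mem K σ (nul K σ) :=
  (nul_cost_pack K σ).1

theorem addcost_tgt_self {S : Type} (K : S → ℕ) (σ : Ty S) (c : ℕ) (hc : 0 < c)
    (x : Interp K σ) : TGt K σ (addcost K σ c x) x := by
  have := (nul_cost_pack K σ).2.1 c 0 x hc
  rwa [addcost_zero] at this

theorem tgt_tge_addcost_one {S : Type} (K : S → ℕ) : ∀ (σ : Ty S) (x y : Interp K σ),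
    TGt K σ x y → TGe K σ x (addcost K σ 1 y)
  | .base _, x, y, h => fun i => by
      simp only [addcost]
      by_cases hi : i = 0
      · subst hi
        have h2 := h.2
        simp only [if_pos trivial, if_true, eq_self_iff_true]
        omega
      · simp [hi, h.1 i]
  | .arrow σ τ, F, G, h => fun d hd =>
      tgt_tge_addcost_one K τ (F d) (G d) (h.2 d hd)

/-- For every strongly monotonic functional `F` of type `σ ⇒ τ`, every `x` in
the interpretation of `σ` and every `n`:
`F (addcost σ n x) ⊒_τ addcost τ n (F x)`. -/
theorem apply_addcost_ge {S : Type} (K : S → ℕ) (σ τ : Ty S)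
    (F : Interp K (Ty.arrow σ τ)) (hF : Mem K (Ty.arrow σ τ) F)
    (x : Interp K σ) (hx : Mem K σ x) (n : ℕ) :
    TGe K τ (F (addcost K σ n x)) (addcost K τ n (F x)) := by
  induction n with
  | zero =>
      rw [addcost_zero, addcost_zero]
      exact tge_refl K τ (F x)
  | succ n ih =>
      set y := addcost K σ n x with hy
      have hyMem : Mem K σ y := mem_addcost K σ n x hx
      have h1y : Mem K σ (addcost K σ 1 y) := mem_addcost K σ 1 y hyMem
      have hrw : addcost K σ (n + 1) x = addcost K σ 1 y := by
        rw [hy, ← addcost_add, Nat.add_comm]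
      rw [hrw]
      have hgt : TGt K τ (F (addcost K σ 1 y)) (F y) :=
        hF.2.1 _ _ h1y hyMem (addcost_tgt_self K σ 1 Nat.one_pos y)
      have h2 : TGe K τ (F (addcost K σ 1 y)) (addcost K τ 1 (F y)) :=
        tgt_tge_addcost_one K τ _ _ hgt
      have h3 : TGe K τ (addcost K τ 1 (F y)) (addcost K τ 1 (addcost K τ n (F x))) :=
        addcost_tge_mono K τ 1 _ _ ih
      have h4 : addcost K τ 1 (addcost K τ n (F x)) = addcost K τ (n + 1) (F x) := by
        rw [← addcost_add, Nat.add_comm]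
      rw [← h4]
      exact tge_trans K τ _ _ _ h2 h3
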